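/- arXiv:1701.07768 — 2 statements merged into one kernel-verified Lean document; each statement's English description precedes it below -/
import Mathlib

section
/- For every finitely generated group G, there exists a natural epimorphism of graded ℚ-Lie algebras Φ_G: 𝔥(G) ↠ gr(G;ℚ), restricting to the identity on H₁(G;ℚ) in degree 1, which is an isomorphism in degrees 1 and 2. -/
open TensorProduct
open scoped commutatorElement

noncomputable section

namespace ArXiv170107768

/-! ### Fox calculus and Magnus coefficients for free groups -/

/-- The integral group ring `ℤF` of the free group on `n` generators. -/
abbrev GrpRing (n : ℕ) := MonoidAlgebra ℤ (FreeGroup (Fin n))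

/-- Auxiliary group used to define Fox derivatives: pairs `(g, d)` with
multiplication `(g, d) * (h, e) = (g h, d + g·e)`, encoding the Fox product rule
`∂(uv) = ∂u · ε(v) + u · ∂v`. -/
def FoxPair (n : ℕ) := FreeGroup (Fin n) × GrpRing n

instance (n : ℕ) : Group (FoxPair n) where
  mul a b := (a.1 * b.1, a.2 + MonoidAlgebra.single a.1 1 * b.2)
  one := (1, 0)
  inv a := (a.1⁻¹, -(MonoidAlgebra.single a.1⁻¹ 1 * a.2))
  mul_assoc a b c := by
    refine Prod.ext (mul_assoc _ _ _) ?_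
    show (a.2 + MonoidAlgebra.single a.1 1 * b.2) + MonoidAlgebra.single (a.1 * b.1) 1 * c.2
        = a.2 + MonoidAlgebra.single a.1 1 * (b.2 + MonoidAlgebra.single b.1 1 * c.2)
    rw [mul_add, ← mul_assoc, MonoidAlgebra.single_mul_single, mul_one, add_assoc]
  one_mul a := by
    refine Prod.ext (one_mul _) ?_
    show 0 + MonoidAlgebra.single 1 1 * a.2 = a.2
    rw [← MonoidAlgebra.one_def, one_mul, zero_add]
  mul_one a := by
    refine Prod.ext (mul_one _) ?_
    show a.2 + MonoidAlgebra.single a.1 1 * 0 = a.2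
    rw [mul_zero, add_zero]
  inv_mul_cancel a := by
    refine Prod.ext (inv_mul_cancel _) ?_
    show -(MonoidAlgebra.single a.1⁻¹ 1 * a.2) + MonoidAlgebra.single a.1⁻¹ 1 * a.2 = 0
    exact neg_add_cancel _

/-- The group homomorphism `F → F ⋉ ℤF` whose second component is the `i`-th Fox
derivative (on group elements). It is determined by `x_j ↦ (x_j, δ_{ij})`. -/
def foxHom {n : ℕ} (i : Fin n) : FreeGroup (Fin n) →* FoxPair n :=
  FreeGroup.lift fun j => (FreeGroup.of j, if j = i then 1 else 0)

/-- The `i`-th Fox derivative `∂_i : ℤF → ℤF`, extended `ℤ`-linearly from group elements. -/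
def foxD {n : ℕ} (i : Fin n) : GrpRing n →ₗ[ℤ] GrpRing n :=
  Finsupp.linearCombination ℤ (fun g => (foxHom i g).2) ∘ₗ
    (MonoidAlgebra.coeffLinearEquiv ℤ).toLinearMap

/-- The augmentation map `ε : ℤF → ℤ`. -/
def aug {n : ℕ} : GrpRing n →ₗ[ℤ] ℤ :=
  Finsupp.linearCombination ℤ (fun _ => (1 : ℤ)) ∘ₗ
    (MonoidAlgebra.coeffLinearEquiv ℤ).toLinearMap

/-- For a multi-index `I = (i₁, …, i_s)`, the iterated Fox derivative coefficient
`ε_I(w) = ε(∂_{i₁}(∂_{i₂}(⋯ ∂_{i_s}(w))))`; this is the coefficient of `x_{i₁}⋯x_{i_s}`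
in the classical Magnus expansion of `w`. -/
def epsI {n : ℕ} (I : List (Fin n)) (w : FreeGroup (Fin n)) : ℤ :=
  aug (I.foldr (fun i x => foxD i x) (MonoidAlgebra.single w 1))

/-- The coefficients of the Magnus `κ`-expansion relative to the `b × n` matrix `a` of
`π = H₁(φ; ℚ)`:  `κ(w)_{(i₁,…,i_k)} = Σ_{s₁,…,s_k} a_{i₁ s₁} ⋯ a_{i_k s_k} ε_{(s₁,…,s_k)}(w)`. -/
def kappaCoeff {n b : ℕ} (a : Fin b → Fin n → ℚ) (w : FreeGroup (Fin n))
    (I : List (Fin b)) : ℚ :=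
  ∑ σ : Fin I.length → Fin n, (∏ j, a (I.get j) (σ j)) * (epsI (List.ofFn σ) w : ℚ)

/-- The degree-2 part of the Magnus `κ`-expansion, viewed in the free Lie algebra:
`κ₂(w) = Σ_{i<j} κ(w)_{i,j} [y_i, y_j]`. -/
def kappa2El {n b : ℕ} (a : Fin b → Fin n → ℚ) (w : FreeGroup (Fin n)) :
    FreeLieAlgebra ℚ (Fin b) :=
  ∑ i : Fin b, ∑ j : Fin b,
    if (i : ℕ) < (j : ℕ) then
      kappaCoeff a w [i, j] • ⁅FreeLieAlgebra.of ℚ i, FreeLieAlgebra.of ℚ j⁆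
    else 0

/-- The `m × n` matrix `E` is in row-echelon form with `d` nonzero rows and pivots `p`. -/
structure IsRowEchelonWith {m n : ℕ} (E : Fin m → Fin n → ℤ) (d : ℕ)
    (p : Fin d → Fin n) : Prop where
  le_m : d ≤ m
  mono : StrictMono p
  pivot_ne : ∀ (k : Fin d) (hk : (k : ℕ) < m), E ⟨k, hk⟩ (p k) ≠ 0
  pivot_lead : ∀ (k : Fin d) (hk : (k : ℕ) < m) (j : Fin n), (j : ℕ) < (p k : ℕ) →
    E ⟨k, hk⟩ j = 0
  zero_rows : ∀ k : Fin m, d ≤ (k : ℕ) → ∀ j, E k j = 0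

/-! ### Lower central series and the rational associated graded Lie algebra -/

/-- The lower central series with the paper's indexing: `Γ₁ G = G`, `Γ_{k+1} G = [Γ_k G, G]`. -/
def gammaP (G : Type*) [Group G] (k : ℕ) : Subgroup G := (⊤ : Subgroup G).lowerCentralSeries (k - 1)

instance (G : Type*) [Group G] (k : ℕ) : (gammaP G k).Normal := by
  unfold gammaP; infer_instance

lemma mem_gammaP_one {G : Type*} [Group G] (g : G) : g ∈ gammaP G 1 := by
  show g ∈ (⊤ : Subgroup G).lowerCentralSeries 0
  rw [Subgroup.lowerCentralSeries_zero]; trivial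

lemma commElt_mem_gammaP_two {G : Type*} [Group G] (x y : G) : ⁅x, y⁆ ∈ gammaP G 2 := by
  show ⁅x, y⁆ ∈ (⊤ : Subgroup G).lowerCentralSeries 1
  rw [Subgroup.top_lowerCentralSeries_one, commutator_def]
  exact Subgroup.commutator_mem_commutator (Subgroup.mem_top x) (Subgroup.mem_top y)

/-- The quotient group `Γ_k G / Γ_{k+1} G`. -/
def lcsQuot (G : Type*) [Group G] (k : ℕ) :=
  (gammaP G k) ⧸ ((gammaP G (k + 1)).subgroupOf (gammaP G k))

instance (G : Type*) [Group G] (k : ℕ) : Group (lcsQuot G k) := by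
  unfold lcsQuot; infer_instance

/-- The degree-`k` piece `gr_k(G; ℚ) = (Γ_k G / Γ_{k+1} G) ⊗ ℚ` of the rational associated
graded Lie algebra.  (The quotient `Γ_k/Γ_{k+1}` is abelian, so passing through its
abelianization is the identity.) -/
def grQ (G : Type*) [Group G] (k : ℕ) :=
  ℚ ⊗[ℤ] (Additive (Abelianization (lcsQuot G k)))

instance (G : Type*) [Group G] (k : ℕ) : AddCommGroup (grQ G k) := by
  unfold grQ; infer_instance

instance (G : Type*) [Group G] (k : ℕ) : Module ℚ (grQ G k) := by
  unfold grQ; infer_instance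

/-- The class in `gr_k(G; ℚ)` of an element of `Γ_k G`. -/
def grCls (G : Type*) [Group G] (k : ℕ) (x : gammaP G k) : grQ G k :=
  (1 : ℚ) ⊗ₜ[ℤ] Additive.ofMul (Abelianization.of (QuotientGroup.mk x : lcsQuot G k))

/-! ### Models of `H₁(G;ℚ)`, of `gr(G;ℚ)` as a graded Lie algebra, and of `𝔥(G)` -/

/-- `(V, cls)` is a model of `H₁(G; ℚ) = G_{ab} ⊗ ℚ` together with its canonical class map. -/
structure IsH1Q (G : Type u) [Group G] (V : Type v) [AddCommGroup V] [Module ℚ V]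
    (cls : G → V) : Prop where
  map_mul : ∀ x y : G, cls (x * y) = cls x + cls y
  ker : ∀ x : G, cls x = 0 ↔ ∃ k : ℕ, 0 < k ∧ x ^ k ∈ commutator G
  span : Submodule.span ℚ (Set.range cls) = ⊤

/-- `(L, Lk, cls)` is a model of the rational associated graded Lie algebra
`gr(G; ℚ) = ⊕_{k ≥ 1} (Γ_k G/Γ_{k+1} G) ⊗ ℚ`, with `Lk k` the degree-`k` piece and
`cls k : Γ_k G → L` the canonical class maps; the Lie bracket is induced by the
group commutator. -/
structure IsGrLie (G : Type u) [Group G] (L : Type v) [LieRing L] [LieAlgebra ℚ L]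
    (Lk : ℕ → Submodule ℚ L) (cls : ∀ k : ℕ, (gammaP G k) → L) : Prop where
  internal : DirectSum.IsInternal Lk
  zero : Lk 0 = ⊥
  mem : ∀ (k : ℕ) (x : gammaP G k), cls k x ∈ Lk k
  map_mul : ∀ (k : ℕ) (x y : gammaP G k), cls k (x * y) = cls k x + cls k y
  ker : ∀ (k : ℕ) (x : gammaP G k),
    cls k x = 0 ↔ ∃ j : ℕ, 0 < j ∧ (x : G) ^ j ∈ gammaP G (k + 1)
  span : ∀ k : ℕ, Lk k = Submodule.span ℚ (Set.range (cls k))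
  bracket : ∀ (j k : ℕ) (x : gammaP G j) (y : gammaP G k)
      (h : ⁅(x : G), (y : G)⁆ ∈ gammaP G (j + k)),
      ⁅cls j x, cls k y⁆ = cls (j + k) ⟨⁅(x : G), (y : G)⁆, h⟩

/-- The finite family `(c_i, x_i, y_i)` represents `0` in `gr₂(G; ℚ)`; equivalently, the
corresponding element `Σ c_i · (x̄_i ∧ ȳ_i)` of `⋀² H₁(G;ℚ)` lies in the kernel of the Lie
bracket map `⋀² H₁(G;ℚ) → gr₂(G;ℚ)`. -/
def GrTrivial (G : Type*) [Group G] (s : Finset ℕ) (c : ℕ → ℚ) (x y : ℕ → G) : Prop :=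
  ∑ i ∈ s, c i • grCls G 2 ⟨⁅x i, y i⁆, commElt_mem_gammaP_two _ _⟩ = 0

/-- `(H, ι)` is a model of the holonomy Lie algebra `𝔥(G)`: the quotient of the free
Lie algebra on `H₁(G; ℚ)` by the ideal generated by the kernel of the Lie bracket map
`⋀² H₁(G;ℚ) → gr₂(G;ℚ)` (equivalently, by the image of the dual of the cup product).
Here `ι : G → H` is the composite of the class map `G → H₁(G;ℚ)` with the inclusion of
the degree-one part, and `H` is characterized by the universal property of this quotient. -/
structure IsHolonomy (G : Type u) [Group G] (H : Type v) [LieRing H] [LieAlgebra ℚ H]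
    (ι : G → H) : Prop where
  map_mul : ∀ x y : G, ι (x * y) = ι x + ι y
  ker : ∀ x : G, ι x = 0 ↔ ∃ k : ℕ, 0 < k ∧ x ^ k ∈ commutator G
  gen : LieSubalgebra.lieSpan ℚ H (Set.range ι) = ⊤
  rel : ∀ (s : Finset ℕ) (c : ℕ → ℚ) (x y : ℕ → G), GrTrivial G s c x y →
      ∑ i ∈ s, c i • ⁅ι (x i), ι (y i)⁆ = 0
  univ : ∀ (M : Type (max u v)) [LieRing M] [LieAlgebra ℚ M] (f : G → M),
      (∀ x y : G, f (x * y) = f x + f y) →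
      (∀ (s : Finset ℕ) (c : ℕ → ℚ) (x y : ℕ → G), GrTrivial G s c x y →
        ∑ i ∈ s, c i • ⁅f (x i), f (y i)⁆ = 0) →
      ∃! F : H →ₗ⁅ℚ⁆ M, ∀ g : G, F (ι g) = f g

/-! ### Gradings -/

/-- The standard grading determined by a degree-one piece `V` of a Lie algebra generated in
degree one: `lieDeg V 1 = V` and `lieDeg V (k+1) = span ⁅V, lieDeg V k⁆`. -/
def lieDeg {L : Type*} [LieRing L] [LieAlgebra ℚ L] (V : Submodule ℚ L) :
    ℕ → Submodule ℚ L
  | 0 => ⊥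
  | 1 => V
  | (k + 2) => Submodule.span ℚ {z | ∃ x ∈ V, ∃ y ∈ lieDeg V (k + 1), z = ⁅x, y⁆}

/-- The canonical grading of (a model of) the holonomy Lie algebra `𝔥(G)`, with
`H₁(G;ℚ)` in degree one. -/
def holDeg {G : Type u} [Group G] {H : Type v} [LieRing H] [LieAlgebra ℚ H]
    (ι : G → H) (k : ℕ) : Submodule ℚ H :=
  lieDeg (Submodule.span ℚ (Set.range ι)) k

/-- Two Lie algebras with specified gradings are isomorphic as graded Lie algebras. -/
def IsGradedLieIso {L₁ : Type u} {L₂ : Type v} [LieRing L₁] [LieAlgebra ℚ L₁]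
    [LieRing L₂] [LieAlgebra ℚ L₂] (d₁ : ℕ → Submodule ℚ L₁) (d₂ : ℕ → Submodule ℚ L₂) :
    Prop :=
  ∃ e : L₁ ≃ₗ⁅ℚ⁆ L₂, ∀ k, (d₁ k).map (e.toLinearEquiv.toLinearMap) = d₂ k

/-! ### Finitely presented Lie algebras -/

/-- The degree-one part of the free Lie algebra on the generating set `X`. -/
def flV (X : Type*) : Submodule ℚ (FreeLieAlgebra ℚ X) :=
  Submodule.span ℚ (Set.range (FreeLieAlgebra.of ℚ))

/-- The quotient of the free Lie algebra on the generating set `X` by the Lie ideal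
generated by the set `S`. -/
def presLie (X : Type*) (S : Set (FreeLieAlgebra ℚ X)) :=
  (FreeLieAlgebra ℚ X) ⧸ (LieSubmodule.lieSpan ℚ (FreeLieAlgebra ℚ X) S)

instance (X : Type*) (S : Set (FreeLieAlgebra ℚ X)) : LieRing (presLie X S) := by
  unfold presLie; infer_instance

instance (X : Type*) (S : Set (FreeLieAlgebra ℚ X)) : LieAlgebra ℚ (presLie X S) := by
  unfold presLie; infer_instance

/-- The induced grading on `presLie X S` (images of the graded pieces of the free
Lie algebra). -/
def presDeg (X : Type*) (S : Set (FreeLieAlgebra ℚ X)) (k : ℕ) :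
    Submodule ℚ (presLie X S) :=
  (lieDeg (flV X) k).map
    (LieSubmodule.Quotient.mk' (LieSubmodule.lieSpan ℚ (FreeLieAlgebra ℚ X) S)).toLinearMap

/-- `G` is graded-formal: the canonical surjection `Φ_G : 𝔥(G) ↠ gr(G;ℚ)` (the morphism
restricting to the identity of `H₁(G;ℚ)` in degree one) is an isomorphism. -/
def GradedFormal (G : Type u) [Group G] : Prop :=
  ∀ (H : Type u) [LieRing H] [LieAlgebra ℚ H] (ι : G → H)
    (L : Type u) [LieRing L] [LieAlgebra ℚ L] (Lk : ℕ → Submodule ℚ L)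
    (cls : ∀ k : ℕ, (gammaP G k) → L),
    IsHolonomy G H ι → IsGrLie G L Lk cls →
    ∀ Φ : H →ₗ⁅ℚ⁆ L, (∀ g : G, Φ (ι g) = cls 1 ⟨g, mem_gammaP_one g⟩) →
    Function.Bijective Φ

/-! The universal property of `𝔥(G)` produces `Φ` from the degree-one class map `G → gr₁`, once
the holonomy relations are checked in `gr`: for this, `gr₂(G; ℚ) = ℚ ⊗ Γ₂/Γ₃` must map injectively
into the degree-two piece of the model `L`, which holds because `ℚ ⊗ -` kills exactly the torsion
of an abelian group. Both sides are generated in degree one (for `gr` because `Γ_{k+2}` is generated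
by the commutators `[Γ_{k+1}, G]`), so `Φ` respects the gradings and is onto. Injectivity in degrees
one and two is the same torsion argument, applied to `ℚ ⊗ G_ab → gr₁` and to `gr₂ → L`; in degree
two the defining relations of `𝔥(G)` then kill every combination of brackets mapped to zero. -/

end ArXiv170107768

section Localization

variable {R K : Type*} [CommRing R] [CommRing K] [Algebra R K] (S : Submonoid R)
  [IsLocalization S K] {A M N : Type*} [AddCommGroup A] [Module R A]
  [AddCommGroup M] [Module R M] [Module K M] [IsScalarTower R K M]
  [AddCommGroup N] [Module R N] [Module K N] [IsScalarTower R K N]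

theorem LinearMap.liftBaseChange_injective_of_isLocalization (g : A →ₗ[R] M)
    (hg : ∀ a, g a = 0 → ∃ s ∈ S, s • a = 0) : Function.Injective (g.liftBaseChange K) := by
  rw [← LinearMap.ker_eq_bot, LinearMap.ker_eq_bot']
  intro u hu
  obtain ⟨⟨a, s⟩, hs⟩ := IsLocalizedModule.surj S (TensorProduct.mk R K A 1) u
  have hs' : algebraMap R K s • u = 1 ⊗ₜ a := by rw [algebraMap_smul]; exact hs
  have hga : g a = 0 := by
    rw [← g.liftBaseChange_one_tmul K, ← hs', map_smul, hu, smul_zero]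
  obtain ⟨t, ht, hta⟩ := hg a hga
  have h1a : (1 : K) ⊗ₜ[R] a = 0 :=
    (IsLocalizedModule.eq_zero_iff S (TensorProduct.mk R K A 1)).mpr ⟨⟨t, ht⟩, hta⟩
  rw [h1a] at hs'
  exact (IsLocalization.map_units K s).smul_eq_zero.mp hs'

theorem LinearMap.eq_zero_of_mem_span_range_of_isLocalization (g : A →ₗ[R] M) (F : M →ₗ[K] N)
    (hF : ∀ a, F (g a) = 0 → ∃ s ∈ S, s • a = 0) :
    ∀ m ∈ Submodule.span K (Set.range g), F m = 0 → m = 0 := by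
  rw [← LinearMap.coe_range, ← g.range_liftBaseChange K]
  rintro _ ⟨u, rfl⟩ hu
  rw [← LinearMap.comp_apply, LinearMap.liftBaseChange_comp] at hu
  rw [liftBaseChange_injective_of_isLocalization S _ hF (hu.trans (map_zero _).symm), map_zero]

end Localization

namespace Abelianization

variable {Q M : Type*} [Group Q] [AddCommGroup M]

theorem of_surjective : Function.Surjective (of : Q →* Abelianization Q) :=
  QuotientGroup.mk_surjective

def liftAdd (f : Q →* Multiplicative M) : Additive (Abelianization Q) →ₗ[ℤ] M :=
  (MonoidHom.toAdditiveLeft (lift f)).toIntLinearMap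

theorem range_liftAdd (f : Q →* Multiplicative M) :
    Set.range (liftAdd f) = Set.range fun x => (f x).toAdd :=
  ((Additive.ofMul.surjective.comp of_surjective).range_comp _).symm

theorem exists_smul_eq_zero_of_map_eq_zero {A : Type*} [AddCommGroup A]
    (g : Additive (Abelianization Q) →ₗ[ℤ] A)
    (hg : ∀ x, g (Additive.ofMul (of x)) = 0 → ∃ n : ℕ, 0 < n ∧ x ^ n ∈ commutator Q)
    (a : Additive (Abelianization Q)) (ha : g a = 0) :
    ∃ s ∈ nonZeroDivisors ℤ, s • a = 0 := by
  obtain ⟨x, rfl⟩ := Additive.ofMul.surjective.comp of_surjective a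
  obtain ⟨n, hn, hxn⟩ := hg x ha
  refine ⟨n, mem_nonZeroDivisors_of_ne_zero (by exact_mod_cast hn.ne'), ?_⟩
  rw [natCast_zsmul, Function.comp_apply, ← ofMul_pow, ← map_pow,
    (MonoidHom.mem_ker.mp (ker_of Q ▸ hxn)), ofMul_one]

end Abelianization

theorem Finset.exists_bijOn_range {α : Type*} [Nonempty α] (t : Finset α) :
    ∃ (n : ℕ) (e : ℕ → α), Set.BijOn e (Finset.range n) t := by
  inhabit α
  refine ⟨t.toList.length, fun i => t.toList.getD i default, fun i hi => ?_,
    fun i hi j hj hij => ?_, fun a ha => ?_⟩ <;> simp only [Finset.coe_range, Set.mem_Iio] at *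
  · rw [List.getD_eq_getElem _ _ hi]
    exact Finset.mem_toList.mp (List.getElem_mem hi)
  · rw [List.getD_eq_getElem _ _ hi, List.getD_eq_getElem _ _ hj] at hij
    exact (t.nodup_toList.getElem_inj_iff).mp hij
  · obtain ⟨i, hi, rfl⟩ := List.mem_iff_getElem.mp (Finset.mem_toList.mpr ha)
    exact ⟨i, hi, List.getD_eq_getElem _ _ hi⟩

namespace ArXiv170107768

section LieDeg

variable {L L' : Type*} [LieRing L] [LieAlgebra ℚ L] [LieRing L'] [LieAlgebra ℚ L']

theorem lieDeg_add_two (V : Submodule ℚ L) (k : ℕ) :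
    lieDeg V (k + 2) = Submodule.span ℚ (Set.image2 (⁅·, ·⁆) (V : Set L) (lieDeg V (k + 1))) := by
  rw [lieDeg]
  congr 1
  ext z
  simp [Set.image2, eq_comm]

theorem lieDeg_map (Φ : L →ₗ⁅ℚ⁆ L') (V : Submodule ℚ L) :
    ∀ k, (lieDeg V k).map Φ.toLinearMap = lieDeg (V.map Φ.toLinearMap) k
  | 0 => Submodule.map_bot _
  | 1 => rfl
  | k + 2 => by
    rw [lieDeg_add_two, lieDeg_add_two, Submodule.map_span, ← lieDeg_map Φ V (k + 1),
      Submodule.map_coe, Submodule.map_coe, LieHom.coe_toLinearMap,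
      Set.image_image2_distrib fun a b => Φ.map_lie a b]

theorem lieDeg_span_two (s : Set L) :
    lieDeg (Submodule.span ℚ s) 2 = Submodule.span ℚ (Set.image2 (⁅·, ·⁆) s s) := by
  have h := Submodule.map₂_span_span ℚ (LieModule.toEnd ℚ L L : L →ₗ[ℚ] Module.End ℚ L) s s
  rw [Submodule.map₂_eq_span_image2] at h
  rw [lieDeg_add_two]
  exact h

end LieDeg

section GrLie

variable {G : Type*} [Group G]

theorem gammaP_add_two (k : ℕ) : gammaP G (k + 2) = ⁅gammaP G (k + 1), ⊤⁆ := rfl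

namespace IsGrLie

variable {L : Type*} [LieRing L] [LieAlgebra ℚ L] {Lk : ℕ → Submodule ℚ L}
  {cls : ∀ k : ℕ, gammaP G k → L} (hL : IsGrLie G L Lk cls)
include hL

def clsHom (k : ℕ) : gammaP G k →* Multiplicative L :=
  MonoidHom.mk' (fun x => Multiplicative.ofAdd (cls k x)) fun x y =>
    congrArg Multiplicative.ofAdd (hL.map_mul k x y)

def quotHom (k : ℕ) : lcsQuot G k →* Multiplicative L :=
  QuotientGroup.lift _ (hL.clsHom k) fun x hx =>
    congrArg Multiplicative.ofAdd ((hL.ker k x).mpr ⟨1, one_pos, by rwa [pow_one]⟩)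

def grQLift (k : ℕ) : grQ G k →ₗ[ℚ] L :=
  (Abelianization.liftAdd (hL.quotHom k)).liftBaseChange ℚ

theorem grQLift_grCls (k : ℕ) (x : gammaP G k) : hL.grQLift k (grCls G k x) = cls k x :=
  one_smul ℚ _

theorem grQLift_injective (k : ℕ) : Function.Injective (hL.grQLift k) := by
  refine LinearMap.liftBaseChange_injective_of_isLocalization (nonZeroDivisors ℤ) _
    (Abelianization.exists_smul_eq_zero_of_map_eq_zero _ fun x hx => ?_)
  obtain ⟨y, rfl⟩ := QuotientGroup.mk_surjective x
  obtain ⟨j, hj, hyj⟩ := (hL.ker k y).mp hx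
  have h1 : (QuotientGroup.mk (y ^ j) : lcsQuot G k) = 1 := (QuotientGroup.eq_one_iff _).mpr hyj
  exact ⟨j, hj, (show (QuotientGroup.mk y : lcsQuot G k) ^ j = 1 from h1) ▸ one_mem _⟩

theorem span_one :
    Lk 1 = Submodule.span ℚ (Set.range fun g : G => cls 1 ⟨g, mem_gammaP_one g⟩) := by
  rw [hL.span 1]
  have hsurj : Function.Surjective fun g : G => (⟨g, mem_gammaP_one g⟩ : gammaP G 1) :=
    fun x => ⟨x.1, rfl⟩
  rw [← hsurj.range_comp (cls 1)]
  rfl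

theorem lie_mem_add_two {k : ℕ} {a b : L} (ha : a ∈ Lk 1) (hb : b ∈ Lk (k + 1)) :
    ⁅a, b⁆ ∈ Lk (k + 2) := by
  have hab := Submodule.apply_mem_map₂ (LieModule.toEnd ℚ L L : L →ₗ[ℚ] Module.End ℚ L) ha hb
  rw [hL.span 1, hL.span (k + 1), Submodule.map₂_span_span] at hab
  refine Submodule.span_le.mpr ?_ hab
  rintro _ ⟨_, ⟨x, rfl⟩, _, ⟨y, rfl⟩, rfl⟩
  have hyx : ⁅(y : G), (x : G)⁆ ∈ gammaP G (k + 2) := by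
    rw [gammaP_add_two]
    exact Subgroup.commutator_mem_commutator y.2 (Subgroup.mem_top _)
  show ⁅cls 1 x, cls (k + 1) y⁆ ∈ Lk (k + 2)
  rw [← lie_skew, hL.bracket (k + 1) 1 y x hyx]
  exact neg_mem (hL.mem _ _)

theorem span_image2_lie (k : ℕ) :
    Submodule.span ℚ (Set.image2 (⁅·, ·⁆) (Lk 1 : Set L) (Lk (k + 1) : Set L)) = Lk (k + 2) := by
  refine le_antisymm (Submodule.span_le.mpr ?_) ?_
  · rintro _ ⟨a, ha, b, hb, rfl⟩
    exact hL.lie_mem_add_two ha hb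
  set W := Submodule.span ℚ (Set.image2 (⁅·, ·⁆) (Lk 1 : Set L) (Lk (k + 1) : Set L))
  -- `gammaP G (k + 2)` is definitionally the closure of the `⁅p, q⁆` with `p ∈ gammaP G (k + 1)`.
  have hT : ⊤ ≤ (AddSubgroup.toSubgroup W.toAddSubgroup).comap (hL.clsHom (k + 2)) := by
    refine (Subgroup.closure_closure_coe_preimage
      (k := {g | ∃ p ∈ gammaP G (k + 1), ∃ q ∈ (⊤ : Subgroup G), ⁅p, q⁆ = g})).ge.trans
      ((Subgroup.closure_le _).mpr ?_)
    rintro ⟨_, hz⟩ ⟨p, hp, q, -, rfl⟩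
    show cls (k + 2) ⟨⁅p, q⁆, hz⟩ ∈ W
    rw [← hL.bracket (k + 1) 1 ⟨p, hp⟩ ⟨q, mem_gammaP_one q⟩ hz, ← lie_skew]
    exact neg_mem (Submodule.subset_span ⟨_, hL.mem 1 _, _, hL.mem (k + 1) _, rfl⟩)
  rw [hL.span (k + 2), Submodule.span_le]
  rintro _ ⟨x, rfl⟩
  exact hT (Subgroup.mem_top x)

theorem lieDeg_eq : ∀ k, lieDeg (Lk 1) k = Lk k
  | 0 => hL.zero.symm
  | 1 => rfl
  | k + 2 => by rw [lieDeg_add_two, lieDeg_eq (k + 1), hL.span_image2_lie]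

theorem map_holDeg {H : Type*} [LieRing H] [LieAlgebra ℚ H] {ι : G → H} {Φ : H →ₗ⁅ℚ⁆ L}
    (hΦ : ∀ g : G, Φ (ι g) = cls 1 ⟨g, mem_gammaP_one g⟩) (k : ℕ) :
    (holDeg ι k).map Φ.toLinearMap = Lk k := by
  have h1 : (Submodule.span ℚ (Set.range ι)).map Φ.toLinearMap = Lk 1 := by
    rw [Submodule.map_span, ← Set.range_comp, hL.span_one]
    simp only [Function.comp_def, LieHom.coe_toLinearMap, hΦ]
  rw [holDeg, lieDeg_map, h1, hL.lieDeg_eq]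

theorem eq_zero_of_mem_span_of_map_eq_zero {V : Type*} [AddCommGroup V] [Module ℚ V]
    {ι : G → V} (hι : ∀ x y, ι (x * y) = ι x + ι y) {Φ : V →ₗ[ℚ] L}
    (hΦ : ∀ g : G, Φ (ι g) = cls 1 ⟨g, mem_gammaP_one g⟩) :
    ∀ v ∈ Submodule.span ℚ (Set.range ι), Φ v = 0 → v = 0 := by
  let ιHom : G →* Multiplicative V :=
    MonoidHom.mk' (fun x => Multiplicative.ofAdd (ι x)) fun x y => congrArg _ (hι x y)
  rw [show Set.range ι = Set.range (Abelianization.liftAdd ιHom) from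
    (Abelianization.range_liftAdd ιHom).symm]
  refine LinearMap.eq_zero_of_mem_span_range_of_isLocalization (nonZeroDivisors ℤ) _ Φ
    (Abelianization.exists_smul_eq_zero_of_map_eq_zero
      (Φ.restrictScalars ℤ ∘ₗ Abelianization.liftAdd ιHom) fun x hx => ?_)
  exact (hL.ker 1 ⟨x, mem_gammaP_one x⟩).mp ((hΦ x).symm.trans hx)

theorem sum_smul_lie_cls_one_eq_grQLift {α : Type*} (t : Finset α) (c : α → ℚ) (x y : α → G) :
    ∑ a ∈ t, c a • ⁅cls 1 ⟨x a, mem_gammaP_one _⟩, cls 1 ⟨y a, mem_gammaP_one _⟩⁆ =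
      hL.grQLift 2 (∑ a ∈ t, c a • grCls G 2 ⟨⁅x a, y a⁆, commElt_mem_gammaP_two _ _⟩) := by
  rw [map_sum]
  refine Finset.sum_congr rfl fun a _ => ?_
  rw [map_smul, hL.grQLift_grCls]
  exact congrArg _ (hL.bracket 1 1 _ _ _)

theorem sum_smul_lie_cls_one_eq_zero {s : Finset ℕ} {c : ℕ → ℚ} {x y : ℕ → G}
    (h : GrTrivial G s c x y) :
    ∑ i ∈ s, c i • ⁅cls 1 ⟨x i, mem_gammaP_one _⟩, cls 1 ⟨y i, mem_gammaP_one _⟩⁆ = 0 := by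
  rw [hL.sum_smul_lie_cls_one_eq_grQLift]
  exact (congrArg _ h).trans (map_zero _)

end IsGrLie

theorem IsHolonomy.sum_smul_lie_eq_zero {H : Type*} [LieRing H] [LieAlgebra ℚ H] {ι : G → H}
    (hH : IsHolonomy G H ι) (t : Finset (G × G)) (c : G × G → ℚ)
    (h : ∑ p ∈ t, c p • grCls G 2 ⟨⁅p.1, p.2⁆, commElt_mem_gammaP_two _ _⟩ = 0) :
    ∑ p ∈ t, c p • ⁅ι p.1, ι p.2⁆ = 0 := by
  obtain ⟨n, e, he⟩ := t.exists_bijOn_range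
  rw [← Finset.sum_nbij e (fun i hi => he.mapsTo hi) he.injOn he.surjOn fun _ _ => rfl] at h ⊢
  exact hH.rel _ _ _ _ h

theorem IsHolonomy.eq_zero_of_mem_holDeg_two {H : Type*} [LieRing H] [LieAlgebra ℚ H] {ι : G → H}
    (hH : IsHolonomy G H ι) {L : Type*} [LieRing L] [LieAlgebra ℚ L] {Lk : ℕ → Submodule ℚ L}
    {cls : ∀ k : ℕ, gammaP G k → L} (hL : IsGrLie G L Lk cls) {Φ : H →ₗ⁅ℚ⁆ L}
    (hΦ : ∀ g : G, Φ (ι g) = cls 1 ⟨g, mem_gammaP_one g⟩) :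
    ∀ x ∈ holDeg ι 2, Φ x = 0 → x = 0 := by
  intro x hx hΦx
  rw [holDeg, lieDeg_span_two, Set.image2_range, Finsupp.mem_span_range_iff_exists_finsupp] at hx
  obtain ⟨c, rfl⟩ := hx
  refine hH.sum_smul_lie_eq_zero c.support c (hL.grQLift_injective 2 ?_)
  rw [← hL.sum_smul_lie_cls_one_eq_grQLift, map_zero, ← hΦx, Finsupp.sum, map_sum]
  simp only [map_smul, LieHom.map_lie, hΦ]

end GrLie

universe u

theorem holonomy_to_gr_epimorphism_general (G : Type u) [Group G]
    (H : Type u) [LieRing H] [LieAlgebra ℚ H] (ι : G → H) (hH : IsHolonomy G H ι)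
    (L : Type u) [LieRing L] [LieAlgebra ℚ L] (Lk : ℕ → Submodule ℚ L)
    (cls : ∀ k : ℕ, (gammaP G k) → L) (hL : IsGrLie G L Lk cls) :
    ∃ Φ : H →ₗ⁅ℚ⁆ L,
      Function.Surjective Φ ∧
      (∀ g : G, Φ (ι g) = cls 1 ⟨g, mem_gammaP_one g⟩) ∧
      (∀ k, (holDeg ι k).map Φ.toLinearMap = Lk k) ∧
      (∀ x ∈ holDeg ι 1, Φ x = 0 → x = 0) ∧
      (∀ x ∈ holDeg ι 2, Φ x = 0 → x = 0) := by
  obtain ⟨Φ, hΦ, -⟩ := hH.univ L (fun g => cls 1 ⟨g, mem_gammaP_one g⟩)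
    (fun x y => hL.map_mul 1 ⟨x, _⟩ ⟨y, _⟩) fun _ _ _ _ => hL.sum_smul_lie_cls_one_eq_zero
  have hdeg := hL.map_holDeg hΦ
  have hsurj : Function.Surjective Φ := by
    refine LinearMap.range_eq_top.mp (eq_top_iff.mpr ?_)
    rw [← hL.internal.submodule_iSup_eq_top, iSup_le_iff]
    exact fun k => hdeg k ▸ LinearMap.map_le_range
  exact ⟨Φ, hsurj, hΦ, hdeg, hL.eq_zero_of_mem_span_of_map_eq_zero hH.map_mul hΦ,
    hH.eq_zero_of_mem_holDeg_two hL hΦ⟩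

/-- Lemma 6.6 of [Suciu–Wang].  For every finitely generated group `G`
there is a natural epimorphism of graded `ℚ`-Lie algebras `Φ_G : 𝔥(G) ↠ gr(G;ℚ)`,
restricting to the identity on `H₁(G;ℚ)` in degree `1`, which is an isomorphism in
degrees `1` and `2`. -/
theorem holonomy_to_gr_epimorphism (G : Type u) [Group G] (hG : Group.FG G)
    (H : Type u) [LieRing H] [LieAlgebra ℚ H] (ι : G → H) (hH : IsHolonomy G H ι)
    (L : Type u) [LieRing L] [LieAlgebra ℚ L] (Lk : ℕ → Submodule ℚ L)
    (cls : ∀ k : ℕ, (gammaP G k) → L) (hL : IsGrLie G L Lk cls) :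
    ∃ Φ : H →ₗ⁅ℚ⁆ L,
      Function.Surjective Φ ∧
      (∀ g : G, Φ (ι g) = cls 1 ⟨g, mem_gammaP_one g⟩) ∧
      (∀ k, (holDeg ι k).map Φ.toLinearMap = Lk k) ∧
      (∀ x ∈ holDeg ι 1, Φ x = 0 → x = 0) ∧
      (∀ x ∈ holDeg ι 2, Φ x = 0 → x = 0) :=
  holonomy_to_gr_epimorphism_general G H ι hH L Lk cls hL

end ArXiv170107768
end
end

section
/- Let G be a finitely generated group. For each i ≥ 2 and each k ≤ 2^i − 1, the quotient map q_i: G ↠ G/G^{(i)} induces an isomorphism gr_k(G;ℚ) → gr_k(G/G^{(i)};ℚ) on the degree-k pieces of the rational associated graded Lie algebras. -/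
open TensorProduct
open scoped commutatorElement

noncomputable section

namespace ArXiv170107768

universe u

instance (G : Type u) [Group G] (n : ℕ) : (derivedSeries G n).Normal :=
  derivedSeries_normal G n

/-! The three subgroups lemma gives `⁅Γ_m, Γ_n⁆ ≤ Γ_{m+n}`, so the derived series descends
exponentially fast along the lower central series: `G⁽ⁱ⁾ ≤ Γ_{2ⁱ}`. Hence for `k < 2ⁱ` the kernel
of `G ↠ G/G⁽ⁱ⁾` lies in `Γ_{k+1}`, and a surjection whose kernel lies in `Γ_{k+1}` maps
`Γ_k G/Γ_{k+1} G` isomorphically onto the corresponding layer of its target; tensoring with `ℚ`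
preserves the isomorphism. Mathlib's `lowerCentralSeries` is indexed from `0`, whence the shifts
`m + n + 1` and `2 ^ i - 1` below. -/

section LowerCentralSeries

variable {G : Type*} [Group G]

theorem commutator_commutator_le_of_rotate {H₁ H₂ H₃ N : Subgroup G} [N.Normal]
    (h1 : ⁅⁅H₂, H₃⁆, H₁⁆ ≤ N) (h2 : ⁅⁅H₃, H₁⁆, H₂⁆ ≤ N) : ⁅⁅H₁, H₂⁆, H₃⁆ ≤ N := by
  simp only [← QuotientGroup.ker_mk' N, ← Subgroup.map_eq_bot_iff, Subgroup.map_commutator]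
    at h1 h2 ⊢
  exact Subgroup.commutator_commutator_eq_bot_of_rotate h1 h2

theorem commutator_lowerCentralSeries_le (m n : ℕ) :
    ⁅(⊤ : Subgroup G).lowerCentralSeries m, (⊤ : Subgroup G).lowerCentralSeries n⁆ ≤
      (⊤ : Subgroup G).lowerCentralSeries (m + n + 1) := by
  induction n generalizing m with
  | zero => exact le_rfl
  | succ n ih =>
    rw [Subgroup.lowerCentralSeries_succ, Subgroup.commutator_comm]
    apply commutator_commutator_le_of_rotate
    · rw [Subgroup.commutator_comm ⊤, ← Subgroup.lowerCentralSeries_succ]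
      exact (ih (m + 1)).trans_eq (by rw [show m + 1 + n + 1 = m + (n + 1) + 1 by omega])
    · exact Subgroup.commutator_mono (ih m) le_rfl

theorem derivedSeries_le_lowerCentralSeries_two_pow_sub_one (i : ℕ) :
    derivedSeries G i ≤ (⊤ : Subgroup G).lowerCentralSeries (2 ^ i - 1) := by
  induction i with
  | zero => exact le_top
  | succ i ih =>
    calc derivedSeries G (i + 1)
        ≤ ⁅(⊤ : Subgroup G).lowerCentralSeries (2 ^ i - 1),
            (⊤ : Subgroup G).lowerCentralSeries (2 ^ i - 1)⁆ :=
          Subgroup.commutator_mono ih ih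
      _ ≤ (⊤ : Subgroup G).lowerCentralSeries (2 ^ i - 1 + (2 ^ i - 1) + 1) :=
          commutator_lowerCentralSeries_le _ _
      _ = (⊤ : Subgroup G).lowerCentralSeries (2 ^ (i + 1) - 1) := by
          have hpos : 1 ≤ 2 ^ i := Nat.one_le_two_pow
          rw [pow_succ]
          congr 1
          omega

end LowerCentralSeries

section Graded

variable {G H : Type*} [Group G] [Group H] (f : G →* H) (k : ℕ)

theorem map_gammaP_le : (gammaP G k).map f ≤ gammaP H k := by
  rw [gammaP, gammaP, Subgroup.map_lowerCentralSeries]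
  exact Subgroup.lowerCentralSeries_mono _ le_top

theorem map_gammaP_of_surjective (hf : Function.Surjective f) :
    (gammaP G k).map f = gammaP H k := by
  rw [gammaP, gammaP, Subgroup.map_lowerCentralSeries, Subgroup.map_top_of_surjective f hf]

def gammaPToLcsQuot : gammaP G k →* lcsQuot H k :=
  (QuotientGroup.mk' _).comp <| (f.comp (gammaP G k).subtype).codRestrict _ fun x =>
    map_gammaP_le f k (Subgroup.mem_map_of_mem f x.2)

theorem gammaPToLcsQuot_eq_one_iff (x : gammaP G k) :
    gammaPToLcsQuot f k x = 1 ↔ f x ∈ gammaP H (k + 1) :=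
  QuotientGroup.eq_one_iff _

theorem gammaPToLcsQuot_surjective (hf : Function.Surjective f) :
    Function.Surjective (gammaPToLcsQuot f k) := by
  intro z
  obtain ⟨⟨y, hy⟩, rfl⟩ := QuotientGroup.mk_surjective z
  rw [← map_gammaP_of_surjective f k hf] at hy
  obtain ⟨x, hx, rfl⟩ := hy
  exact ⟨⟨x, hx⟩, rfl⟩

theorem ker_gammaPToLcsQuot (hf : Function.Surjective f) (hker : f.ker ≤ gammaP G (k + 1)) :
    (gammaPToLcsQuot f k).ker = (gammaP G (k + 1)).subgroupOf (gammaP G k) := by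
  ext x
  rw [MonoidHom.mem_ker, gammaPToLcsQuot_eq_one_iff, Subgroup.mem_subgroupOf,
    ← map_gammaP_of_surjective f (k + 1) hf, ← Subgroup.mem_comap, Subgroup.comap_map_eq,
    sup_eq_left.mpr hker]

def lcsQuotEquivOfSurjective (hf : Function.Surjective f) (hker : f.ker ≤ gammaP G (k + 1)) :
    lcsQuot G k ≃* lcsQuot H k :=
  (QuotientGroup.quotientMulEquivOfEq (ker_gammaPToLcsQuot f k hf hker).symm).trans
    (QuotientGroup.quotientKerEquivOfSurjective _ (gammaPToLcsQuot_surjective f k hf))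

def grQEquivOfSurjective (hf : Function.Surjective f) (hker : f.ker ≤ gammaP G (k + 1)) :
    grQ G k ≃ₗ[ℚ] grQ H k :=
  LinearEquiv.baseChange ℤ ℚ _ _
    (lcsQuotEquivOfSurjective f k hf hker).abelianizationCongr.toAdditive.toIntLinearEquiv

theorem grQEquivOfSurjective_grCls (hf : Function.Surjective f)
    (hker : f.ker ≤ gammaP G (k + 1)) (x : gammaP G k) (hfx : f x ∈ gammaP H k) :
    grQEquivOfSurjective f k hf hker (grCls G k x) = grCls H k ⟨f x, hfx⟩ :=
  rfl

end Graded

theorem gr_derived_quotient_iso_general (G : Type u) [Group G]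
    (i : ℕ) (k : ℕ) (hk : k ≤ 2 ^ i - 1) :
    ∃ Φ : grQ G k →ₗ[ℚ] grQ (G ⧸ derivedSeries G i) k,
      (∀ (x : G) (hx : x ∈ gammaP G k)
        (hy : (QuotientGroup.mk x : G ⧸ derivedSeries G i) ∈
          gammaP (G ⧸ derivedSeries G i) k),
        Φ (grCls G k ⟨x, hx⟩) =
          grCls (G ⧸ derivedSeries G i) k ⟨QuotientGroup.mk x, hy⟩) ∧
      Function.Bijective Φ := by
  have hker : (QuotientGroup.mk' (derivedSeries G i)).ker ≤ gammaP G (k + 1) := by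
    rw [QuotientGroup.ker_mk']
    exact (derivedSeries_le_lowerCentralSeries_two_pow_sub_one i).trans
      (Subgroup.lowerCentralSeries_antitone _ hk)
  let Φ := grQEquivOfSurjective _ k (QuotientGroup.mk'_surjective _) hker
  exact ⟨Φ, fun x hx hy => grQEquivOfSurjective_grCls _ k _ hker ⟨x, hx⟩ hy, Φ.bijective⟩

/-- Lemma 6.10 of [Suciu–Wang].  For a finitely generated group `G`,
each `i ≥ 2`, and each degree `k ≤ 2ⁱ - 1`, the quotient map `q_i : G ↠ G/G⁽ⁱ⁾`
induces an isomorphism `gr_k(G;ℚ) → gr_k(G/G⁽ⁱ⁾;ℚ)`. -/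
theorem gr_derived_quotient_iso (G : Type u) [Group G] (hG : Group.FG G)
    (i : ℕ) (hi : 2 ≤ i) (k : ℕ) (hk1 : 1 ≤ k) (hk : k ≤ 2 ^ i - 1) :
    ∃ Φ : grQ G k →ₗ[ℚ] grQ (G ⧸ derivedSeries G i) k,
      (∀ (x : G) (hx : x ∈ gammaP G k)
        (hy : (QuotientGroup.mk x : G ⧸ derivedSeries G i) ∈
          gammaP (G ⧸ derivedSeries G i) k),
        Φ (grCls G k ⟨x, hx⟩) =
          grCls (G ⧸ derivedSeries G i) k ⟨QuotientGroup.mk x, hy⟩) ∧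
      Function.Bijective Φ :=
  gr_derived_quotient_iso_general G i k hk

end ArXiv170107768
end
end
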